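/- Let X be a Banach space and p ∈ (1, ∞). Then X has the UMD property if and only if there exists C > 0 such that for every n ≥ 1, every martingale difference sequence (d_j)_{j=1}^n in L^p(Ω; X), and every sequence (ε_j)_{j=1}^n with ε_j ∈ {0,1}, one has (E‖Σ_{j=1}^n ε_j d_j‖^p)^{1/p} ≤ C (E‖Σ_{j=1}^n d_j‖^p)^{1/p}. Moreover the least admissible C lies in the interval [(β_{p,X} − 1)/2, β_{p,X}]. -/

import Mathlib

open MeasureTheory Filter Function Set
open scoped NNReal ENNReal Topology

noncomputable section

namespace PaperMD

variable {Ω : Type*} {X : Type*}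

/-- The jump of a path at time `t`. -/
def pathJump {Y : Type*} [LinearOrder ℝ≥0] [TopologicalSpace Y] [Sub Y]
    (f : ℝ≥0 → Y) (t : ℝ≥0) : Y :=
  f t - Function.leftLim f t

/-- A path is pure jump if it equals its initial value plus the sum of its jumps. -/
def PureJumpPath (f : ℝ≥0 → ℝ) : Prop :=
  ∀ t, f t = f 0 + ∑' s : (Set.Ioc (0 : ℝ≥0) t), pathJump f s

/-- A càdlàg path: right-continuous with left limits. -/
def CadlagPath {Y : Type*} [TopologicalSpace Y] (f : ℝ≥0 → Y) : Prop :=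
  (∀ t, Tendsto f (𝓝[≥] t) (𝓝 (f t))) ∧
    ∀ t : ℝ≥0, 0 < t → ∃ l, Tendsto f (𝓝[<] t) (𝓝 l)

/-- `π 0 = 0`, `π` monotone, and `π k = t` for `k ≥ N`: a partition of `[0, t]`. -/
def IsPartition (t : ℝ≥0) (π : ℕ → ℝ≥0) (N : ℕ) : Prop :=
  π 0 = 0 ∧ Monotone π ∧ ∀ k, N ≤ k → π k = t

/-- Mesh of a partition. -/
def mesh (π : ℕ → ℝ≥0) (N : ℕ) : ℝ≥0 :=
  (Finset.range N).sup fun k => π (k + 1) - π k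

/-- The sum of squared increments of `M` along a partition. -/
def qvSum (M : ℝ≥0 → Ω → ℝ) (π : ℕ → ℝ≥0) (N : ℕ) (ω : Ω) : ℝ :=
  ∑ k ∈ Finset.range N, (M (π (k + 1)) ω - M (π k) ω) ^ 2

/-- `Q` is the quadratic variation of `M`: along any sequence of partitions of `[0, t]` with
mesh tending to zero, the sums of squared increments tend to `Q t` in measure. -/
def IsQuadVar {m0 : MeasurableSpace Ω} (μ : Measure Ω) (M Q : ℝ≥0 → Ω → ℝ) : Prop :=
  ∀ (t : ℝ≥0) (π : ℕ → ℕ → ℝ≥0) (N : ℕ → ℕ),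
    (∀ n, IsPartition t (π n) (N n)) →
    Tendsto (fun n => mesh (π n) (N n)) atTop (𝓝 0) →
    TendstoInMeasure μ (fun n ω => qvSum M (π n) (N n) ω) atTop (Q t)

/-- A real-valued martingale is purely discontinuous if its quadratic variation has a
pure-jump version. -/
def PurelyDiscontinuousR {m0 : MeasurableSpace Ω} (μ : Measure Ω) (M : ℝ≥0 → Ω → ℝ) : Prop :=
  ∃ Q : ℝ≥0 → Ω → ℝ, IsQuadVar μ M Q ∧ ∀ᵐ ω ∂μ, PureJumpPath fun t => Q t ω

/-- A Banach-space-valued process is purely discontinuous if all its scalarizations are. -/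
def PurelyDiscontinuous [NormedAddCommGroup X] [NormedSpace ℝ X]
    {m0 : MeasurableSpace Ω} (μ : Measure Ω) (M : ℝ≥0 → Ω → X) : Prop :=
  ∀ L : StrongDual ℝ X, PurelyDiscontinuousR μ fun t ω => L (M t ω)

/-- A predictable stopping time: announced by a sequence of stopping times. -/
def IsPredictableST {m0 : MeasurableSpace Ω} (μ : Measure Ω) (ℱ : Filtration ℝ≥0 m0)
    (τ : Ω → ℝ≥0) : Prop :=
  IsStoppingTime ℱ (fun ω => (τ ω : WithTop ℝ≥0)) ∧
    ∃ τs : ℕ → Ω → ℝ≥0, (∀ n, IsStoppingTime ℱ (fun ω => (τs n ω : WithTop ℝ≥0))) ∧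
      ∀ᵐ ω ∂μ, (∀ n, 0 < τ ω → τs n ω < τ ω) ∧ Monotone (fun n => τs n ω) ∧
        Tendsto (fun n => τs n ω) atTop (𝓝 (τ ω))

/-- A totally inaccessible stopping time avoids every predictable stopping time a.s. -/
def IsTotallyInaccessibleST {m0 : MeasurableSpace Ω} (μ : Measure Ω)
    (ℱ : Filtration ℝ≥0 m0) (τ : Ω → ℝ≥0) : Prop :=
  IsStoppingTime ℱ (fun ω => (τ ω : WithTop ℝ≥0)) ∧ ∀ σ : Ω → ℝ≥0, IsPredictableST μ ℱ σ → μ {ω | τ ω = σ ω} = 0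

/-- The jump of the process `M` at the random time `τ`. -/
def jumpAt {Y : Type*} [TopologicalSpace Y] [Sub Y] (M : ℝ≥0 → Ω → Y)
    (τ : Ω → ℝ≥0) (ω : Ω) : Y :=
  pathJump (fun t => M t ω) (τ ω)

/-- A process has accessible jumps if it does not jump at totally inaccessible stopping
times. -/
def HasAccessibleJumps {Y : Type*} [TopologicalSpace Y] [Sub Y] [Zero Y]
    {m0 : MeasurableSpace Ω} (μ : Measure Ω) (ℱ : Filtration ℝ≥0 m0)
    (M : ℝ≥0 → Ω → Y) : Prop :=
  ∀ τ : Ω → ℝ≥0, IsTotallyInaccessibleST μ ℱ τ → ∀ᵐ ω ∂μ, jumpAt M τ ω = 0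

/-- A process is quasi-left continuous if it does not jump at predictable stopping times. -/
def QuasiLeftContinuous {Y : Type*} [TopologicalSpace Y] [Sub Y] [Zero Y]
    {m0 : MeasurableSpace Ω} (μ : Measure Ω) (ℱ : Filtration ℝ≥0 m0)
    (M : ℝ≥0 → Ω → Y) : Prop :=
  ∀ τ : Ω → ℝ≥0, IsPredictableST μ ℱ τ → ∀ᵐ ω ∂μ, jumpAt M τ ω = 0

/-- An `L^p`-martingale with terminal value `Mlim`. -/
def IsLpMartingale [NormedAddCommGroup X] [NormedSpace ℝ X] [CompleteSpace X]
    {m0 : MeasurableSpace Ω} (μ : Measure Ω) (ℱ : Filtration ℝ≥0 m0)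
    (p : ℝ≥0∞) (M : ℝ≥0 → Ω → X) (Mlim : Ω → X) : Prop :=
  Martingale M ℱ μ ∧ (∀ t, MemLp (M t) p μ) ∧ MemLp Mlim p μ ∧
    Tendsto (fun t : ℝ≥0 => eLpNorm (fun ω => M t ω - Mlim ω) p μ) atTop (𝓝 0) ∧
    ∀ᵐ ω ∂μ, Tendsto (fun t => M t ω) atTop (𝓝 (Mlim ω))

/-- `d` is a martingale difference sequence of an `L^p`-martingale. -/
def MartingaleDiffSeq [NormedAddCommGroup X] [NormedSpace ℝ X] [CompleteSpace X]
    {m0 : MeasurableSpace Ω} (μ : Measure Ω) (p : ℝ≥0∞) (d : ℕ → Ω → X) : Prop :=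
  ∃ (ℱ : Filtration ℕ m0) (f : ℕ → Ω → X), Martingale f ℱ μ ∧
    (∀ j, MemLp (f j) p μ) ∧ ∀ j, d j = fun ω => f (j + 1) ω - f j ω

/-- The UMD-type inequality with transforming multipliers taken from the set `S`,
with constant `β`, for `X`-valued `L^p`-martingale difference sequences. -/
def UMDBoundGen (X : Type*) [NormedAddCommGroup X] [NormedSpace ℝ X] [CompleteSpace X]
    (p : ℝ) (S : Set ℝ) (β : ℝ) : Prop :=
  ∀ (Ω : Type) (m0 : MeasurableSpace Ω) (μ : Measure Ω), IsProbabilityMeasure μ →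
    ∀ d : ℕ → Ω → X, MartingaleDiffSeq μ (ENNReal.ofReal p) d →
    ∀ ε : ℕ → ℝ, (∀ j, ε j ∈ S) → ∀ n : ℕ,
      eLpNorm (fun ω => ∑ j ∈ Finset.range n, ε j • d j ω) (ENNReal.ofReal p) μ ≤
        ENNReal.ofReal β *
          eLpNorm (fun ω => ∑ j ∈ Finset.range n, d j ω) (ENNReal.ofReal p) μ

/-- The classical UMD inequality with signs `±1` and constant `β`. -/
def UMDBound (X : Type*) [NormedAddCommGroup X] [NormedSpace ℝ X] [CompleteSpace X]
    (p β : ℝ) : Prop :=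
  UMDBoundGen X p {-1, 1} β

/-- The `{0,1}`-multiplier martingale inequality with constant `C`. -/
def UMDBound01 (X : Type*) [NormedAddCommGroup X] [NormedSpace ℝ X] [CompleteSpace X]
    (p C : ℝ) : Prop :=
  UMDBoundGen X p {0, 1} C

/-- `X` is a UMD space (for the exponent `p`). -/
def IsUMD (X : Type*) [NormedAddCommGroup X] [NormedSpace ℝ X] [CompleteSpace X]
    (p : ℝ) : Prop :=
  ∃ β > 0, UMDBound X p β

/-- The UMD constant `β_{p,X}`. -/
def umdConst (X : Type*) [NormedAddCommGroup X] [NormedSpace ℝ X] [CompleteSpace X]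
    (p : ℝ) : ℝ :=
  sInf {β : ℝ | 0 < β ∧ UMDBound X p β}

/-- `N` is weakly differentially subordinated to `M`. -/
def WeakDiffSubord [NormedAddCommGroup X] [NormedSpace ℝ X]
    {m0 : MeasurableSpace Ω} (μ : Measure Ω) (M N : ℝ≥0 → Ω → X) : Prop :=
  ∀ L : StrongDual ℝ X,
    (∀ᵐ ω ∂μ, |L (N 0 ω)| ≤ |L (M 0 ω)|) ∧
    ∃ QM QN : ℝ≥0 → Ω → ℝ,
      IsQuadVar μ (fun t ω => L (M t ω)) QM ∧
      IsQuadVar μ (fun t ω => L (N t ω)) QN ∧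
      ∀ᵐ ω ∂μ, Monotone fun t => QM t ω - QN t ω

/-- The Radon–Nikodým property for a Banach space `X`: every `X`-valued vector measure
dominated by a finite measure `μ` has a density with respect to `μ`. -/
def HasRNP (X : Type*) [NormedAddCommGroup X] [NormedSpace ℝ X] : Prop :=
  ∀ (Ω : Type) (m0 : MeasurableSpace Ω) (μ : Measure Ω), IsFiniteMeasure μ →
    ∀ ν : VectorMeasure Ω X, (∀ s, MeasurableSet s → ‖ν s‖ ≤ (μ s).toReal) →
      ∃ f : Ω → X, Integrable f μ ∧ ∀ s, MeasurableSet s → ν s = ∫ ω in s, f ω ∂μ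


/-! ### Auxiliary lemmas -/

private lemma my_aesm_sum {Ω : Type} {m0 : MeasurableSpace Ω} {μ : Measure Ω} {X : Type}
    [NormedAddCommGroup X] [NormedSpace ℝ X] [CompleteSpace X] {q : ℝ≥0∞} {d : ℕ → Ω → X}
    (hd : MartingaleDiffSeq μ q d) (c : ℕ → ℝ) (n : ℕ) :
    AEStronglyMeasurable (fun ω => ∑ j ∈ Finset.range n, c j • d j ω) μ := by
  obtain ⟨ℱ, f, hmart, hmem, hdj⟩ := hd
  refine Finset.aestronglyMeasurable_fun_sum _ fun j _ => ?_
  have hdj' : AEStronglyMeasurable (d j) μ := by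
    rw [hdj j]
    exact (hmem (j + 1)).1.sub (hmem j).1
  exact hdj'.const_smul (c j)

private lemma umdBound_to_01 {X : Type} [NormedAddCommGroup X] [NormedSpace ℝ X]
    [CompleteSpace X] {p β : ℝ} (hp : 1 < p) (hβ : 0 < β) (h : UMDBound X p β) :
    UMDBound01 X p ((1 + β) / 2) := by
  intro Ω m0 μ hμ d hd ε hε n
  have hq1 : (1 : ℝ≥0∞) ≤ ENNReal.ofReal p := ENNReal.one_le_ofReal.2 hp.le
  set η : ℕ → ℝ := fun j => 2 * ε j - 1 with hηdef
  have hη : ∀ j, η j ∈ ({-1, 1} : Set ℝ) := by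
    intro j
    have := hε j
    simp only [Set.mem_insert_iff, Set.mem_singleton_iff] at this ⊢
    rcases this with h0 | h0
    · left; simp [hηdef, h0]
    · right; norm_num [hηdef, h0]
  set A : Ω → X := fun ω => ∑ j ∈ Finset.range n, d j ω with hAdef
  set B : Ω → X := fun ω => ∑ j ∈ Finset.range n, η j • d j ω with hBdef
  have hA : AEStronglyMeasurable A μ := by
    have := my_aesm_sum hd (fun _ => (1 : ℝ)) n
    simpa [hAdef] using this
  have hB : AEStronglyMeasurable B μ := my_aesm_sum hd η n
  have key : (fun ω => ∑ j ∈ Finset.range n, ε j • d j ω) = (2⁻¹ : ℝ) • (A + B) := by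
    funext ω
    simp only [Pi.smul_apply, Pi.add_apply, hAdef, hBdef]
    rw [← Finset.sum_add_distrib, Finset.smul_sum]
    refine Finset.sum_congr rfl fun j _ => ?_
    simp only [hηdef]
    module
  have hbound : eLpNorm B (ENNReal.ofReal p) μ ≤
      ENNReal.ofReal β * eLpNorm A (ENNReal.ofReal p) μ := h Ω m0 μ hμ d hd η hη n
  have hadd := eLpNorm_add_le hA hB hq1
  have hcoef : (‖(2⁻¹ : ℝ)‖₊ : ℝ≥0∞) * (1 + ENNReal.ofReal β) =
      ENNReal.ofReal ((1 + β) / 2) := by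
    rw [← enorm_eq_nnnorm, ← ofReal_norm, ← ENNReal.ofReal_one,
      ← ENNReal.ofReal_add zero_le_one hβ.le,
      ← ENNReal.ofReal_mul (norm_nonneg _)]
    congr 1
    rw [Real.norm_eq_abs, abs_of_nonneg (by norm_num : (0 : ℝ) ≤ 2⁻¹)]
    ring
  set N := eLpNorm A (ENNReal.ofReal p) μ with hN
  calc eLpNorm (fun ω => ∑ j ∈ Finset.range n, ε j • d j ω) (ENNReal.ofReal p) μ
      = (‖(2⁻¹ : ℝ)‖₊ : ℝ≥0∞) * eLpNorm (A + B) (ENNReal.ofReal p) μ := by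
        rw [key, eLpNorm_const_smul, enorm_eq_nnnorm]
    _ ≤ (‖(2⁻¹ : ℝ)‖₊ : ℝ≥0∞) * (N + eLpNorm B (ENNReal.ofReal p) μ) :=
        mul_le_mul_right hadd _
    _ ≤ (‖(2⁻¹ : ℝ)‖₊ : ℝ≥0∞) * (N + ENNReal.ofReal β * N) :=
        mul_le_mul_right (add_le_add_right hbound _) _
    _ = ENNReal.ofReal ((1 + β) / 2) * N := by
        rw [show N + ENNReal.ofReal β * N = (1 + ENNReal.ofReal β) * N by
          rw [add_mul, one_mul], ← mul_assoc, hcoef]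

private lemma umd01_to_bound {X : Type} [NormedAddCommGroup X] [NormedSpace ℝ X]
    [CompleteSpace X] {p C : ℝ} (hp : 1 < p) (hC : 0 < C) (h : UMDBound01 X p C) :
    UMDBound X p (2 * C + 1) := by
  intro Ω m0 μ hμ d hd η hη n
  have hq1 : (1 : ℝ≥0∞) ≤ ENNReal.ofReal p := ENNReal.one_le_ofReal.2 hp.le
  set ε : ℕ → ℝ := fun j => (η j + 1) / 2 with hεdef
  have hε : ∀ j, ε j ∈ ({0, 1} : Set ℝ) := by
    intro j
    have := hη j
    simp only [Set.mem_insert_iff, Set.mem_singleton_iff] at this ⊢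
    rcases this with h0 | h0
    · left; simp [hεdef, h0]
    · right; simp [hεdef, h0]
  set A : Ω → X := fun ω => ∑ j ∈ Finset.range n, d j ω with hAdef
  set B : Ω → X := fun ω => ∑ j ∈ Finset.range n, ε j • d j ω with hBdef
  have hA : AEStronglyMeasurable A μ := by
    have := my_aesm_sum hd (fun _ => (1 : ℝ)) n
    simpa [hAdef] using this
  have hB : AEStronglyMeasurable B μ := my_aesm_sum hd ε n
  have key : (fun ω => ∑ j ∈ Finset.range n, η j • d j ω) = (2 : ℝ) • B - A := by
    funext ω
    simp only [Pi.sub_apply, Pi.smul_apply, hAdef, hBdef]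
    rw [Finset.smul_sum, ← Finset.sum_sub_distrib]
    refine Finset.sum_congr rfl fun j _ => ?_
    simp only [hεdef]
    module
  have hbound : eLpNorm B (ENNReal.ofReal p) μ ≤
      ENNReal.ofReal C * eLpNorm A (ENNReal.ofReal p) μ := h Ω m0 μ hμ d hd ε hε n
  have hcoef : (‖(2 : ℝ)‖₊ : ℝ≥0∞) * ENNReal.ofReal C + 1 = ENNReal.ofReal (2 * C + 1) := by
    rw [← enorm_eq_nnnorm, ← ofReal_norm, ← ENNReal.ofReal_mul (norm_nonneg _),
      ← ENNReal.ofReal_one, ← ENNReal.ofReal_add (by positivity) zero_le_one]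
    congr 1
    rw [Real.norm_eq_abs, abs_of_nonneg (by norm_num : (0 : ℝ) ≤ 2)]
  set N := eLpNorm A (ENNReal.ofReal p) μ with hN
  calc eLpNorm (fun ω => ∑ j ∈ Finset.range n, η j • d j ω) (ENNReal.ofReal p) μ
      = eLpNorm ((2 : ℝ) • B - A) (ENNReal.ofReal p) μ := by rw [key]
    _ ≤ eLpNorm ((2 : ℝ) • B) (ENNReal.ofReal p) μ + N :=
        eLpNorm_sub_le (hB.const_smul _) hA hq1
    _ = (‖(2 : ℝ)‖₊ : ℝ≥0∞) * eLpNorm B (ENNReal.ofReal p) μ + N := by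
        rw [eLpNorm_const_smul, enorm_eq_nnnorm]
    _ ≤ (‖(2 : ℝ)‖₊ : ℝ≥0∞) * (ENNReal.ofReal C * N) + N :=
        add_le_add_left (mul_le_mul_right hbound _) _
    _ = ENNReal.ofReal (2 * C + 1) * N := by
        rw [← hcoef, add_mul, one_mul, mul_assoc]

private lemma subsingleton_bound {X : Type} [NormedAddCommGroup X] [NormedSpace ℝ X]
    [CompleteSpace X] [Subsingleton X] {p : ℝ} (S : Set ℝ) (β : ℝ) : UMDBoundGen X p S β := by
  intro Ω m0 μ hμ d hd ε hε n
  have h0 : (fun ω => ∑ j ∈ Finset.range n, ε j • d j ω) = (0 : Ω → X) :=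
    funext fun ω => Subsingleton.elim _ _
  rw [h0, eLpNorm_zero]
  exact zero_le

/-- The uniform measure on `Bool`. -/
private def boolMeasure : Measure Bool :=
  (2⁻¹ : ℝ≥0∞) • (Measure.dirac true + Measure.dirac false)

private lemma boolMeasure_singleton (b : Bool) : boolMeasure {b} = 2⁻¹ := by
  cases b <;>
    simp [boolMeasure, Measure.dirac_apply, Set.indicator]

private instance : IsProbabilityMeasure boolMeasure := by
  constructor
  have : (Set.univ : Set Bool) = {true} ∪ {false} := by
    ext b; cases b <;> simp
  rw [this, measure_union (by simp) (measurableSet_singleton _),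
    boolMeasure_singleton, boolMeasure_singleton]
  rw [ENNReal.inv_two_add_inv_two]

/-- The filtration on `Bool` which is trivial at time `0` and full afterwards. -/
private def boolFiltration : Filtration ℕ (inferInstance : MeasurableSpace Bool) where
  seq n := if n = 0 then ⊥ else (inferInstance : MeasurableSpace Bool)
  mono' := by
    intro i j hij
    by_cases hi : i = 0
    · simp only [hi, if_pos]
      exact bot_le
    · have hj : j ≠ 0 := by omega
      simp [hi, hj]
  le' := by
    intro i
    by_cases hi : i = 0 <;> simp [hi]

private lemma umd_ge_one {X : Type} [NormedAddCommGroup X] [NormedSpace ℝ X]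
    [CompleteSpace X] [Nontrivial X] {p β : ℝ} (hp : 1 < p) {S : Set ℝ}
    (h1S : (1 : ℝ) ∈ S) (h : UMDBoundGen X p S β) : 1 ≤ β := by
  obtain ⟨x, hx⟩ := exists_ne (0 : X)
  set μ := boolMeasure with hμdef
  set g : Bool → X := fun ω => (if ω then (1 : ℝ) else -1) • x with hgdef
  have hgsm : StronglyMeasurable g := by
    refine StronglyMeasurable.smul_const ?_ x
    exact (measurable_from_top (f := fun ω : Bool => if ω then (1 : ℝ) else -1)).stronglyMeasurable
  have hgmem : MemLp g (ENNReal.ofReal p) μ := by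
    refine MemLp.of_bound hgsm.aestronglyMeasurable ‖x‖ ?_
    refine Filter.Eventually.of_forall fun ω => ?_
    cases ω <;> simp [hgdef, norm_smul]
  have hq1 : (1 : ℝ≥0∞) ≤ ENNReal.ofReal p := ENNReal.one_le_ofReal.2 hp.le
  have hgint : Integrable g μ := hgmem.integrable hq1
  have hgavg : ∫ ω, g ω ∂μ = 0 := by
    rw [integral_fintype hgint]
    simp only [Fintype.sum_bool, Measure.real, boolMeasure_singleton, hμdef]
    simp [hgdef, smul_smul]
  set f : ℕ → Bool → X := fun n => if n = 0 then 0 else g with hfdef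
  have hfint : ∀ j, Integrable (f j) μ := by
    intro j
    by_cases hj : j = 0
    · rw [show f j = 0 from by simp [hfdef, hj]]
      exact integrable_zero _ _ _
    · rw [show f j = g from by simp [hfdef, hj]]
      exact hgint
  have hfavg : ∀ j, ∫ ω, f j ω ∂μ = 0 := by
    intro j
    by_cases hj : j = 0 <;> simp [hfdef, hj, hgavg]
  have hmart : Martingale f boolFiltration μ := by
    constructor
    · intro n
      by_cases hn : n = 0
      · have : boolFiltration n = (⊥ : MeasurableSpace Bool) := by
          simp [boolFiltration, hn]
        rw [this]
        simp only [hfdef, hn, if_pos]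
        exact stronglyMeasurable_zero
      · have h1 : boolFiltration n = (inferInstance : MeasurableSpace Bool) := by
          simp [boolFiltration, hn]
        have h2 : f n = g := by simp [hfdef, hn]
        rw [h1, h2]
        exact hgsm
    · intro i j hij
      by_cases hi : i = 0
      · have hb : boolFiltration i = (⊥ : MeasurableSpace Bool) := by
          simp [boolFiltration, hi]
        rw [hb, condExp_bot]
        rw [hfavg j]
        subst hi
        have h2 : f 0 = 0 := by simp [hfdef]
        rw [h2]
        exact Filter.Eventually.of_forall fun _ => rfl
      · have hj : j ≠ 0 := by omega
        have hb : boolFiltration i = (inferInstance : MeasurableSpace Bool) := by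
          simp [boolFiltration, hi]
        rw [hb]
        have hfj : f j = g := by simp [hfdef, hj]
        have hfi : f i = g := by simp [hfdef, hi]
        rw [hfj, hfi, condExp_of_stronglyMeasurable le_rfl hgsm hgint]
  set d : ℕ → Bool → X := fun j ω => f (j + 1) ω - f j ω with hddef
  have hdseq : MartingaleDiffSeq μ (ENNReal.ofReal p) d := by
    refine ⟨boolFiltration, f, hmart, fun j => ?_, fun j => rfl⟩
    by_cases hj : j = 0
    · simp only [hfdef, hj, if_pos]
      exact MemLp.zero
    · simpa [hfdef, hj] using hgmem
  have hineq := h Bool (inferInstance) μ (by infer_instance) d hdseq (fun _ => 1)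
    (fun _ => h1S) 1
  have hsum : (fun ω => ∑ j ∈ Finset.range 1, d j ω) = g := by
    funext ω
    simp [hddef, hfdef]
  have hsum1 : (fun ω => ∑ j ∈ Finset.range 1, (fun _ : ℕ => (1 : ℝ)) j • d j ω) = g := by
    funext ω
    simp [hddef, hfdef]
  rw [hsum, hsum1] at hineq
  set N := eLpNorm g (ENNReal.ofReal p) μ with hNdef
  have hN0 : N ≠ 0 := by
    intro hN
    have hq0 : (ENNReal.ofReal p) ≠ 0 := by
      simp only [ne_eq, ENNReal.ofReal_eq_zero, not_le]
      linarith
    have hg0 : g =ᵐ[μ] 0 := (eLpNorm_eq_zero_iff hgsm.aestronglyMeasurable hq0).1 hN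
    obtain ⟨ω, hω⟩ := hg0.exists
    cases ω <;> simp [hgdef] at hω <;> exact hx hω
  have hNtop : N ≠ ⊤ := hgmem.eLpNorm_ne_top
  have h1 : (1 : ℝ≥0∞) * N ≤ ENNReal.ofReal β * N := by rwa [one_mul]
  have := (ENNReal.mul_le_mul_iff_left hN0 hNtop).1 h1
  exact ENNReal.one_le_ofReal.1 this

theorem stmt_7 (X : Type) [NormedAddCommGroup X] [NormedSpace ℝ X] [CompleteSpace X]
    (p : ℝ) (hp : 1 < p) :
    (IsUMD X p ↔ ∃ C > 0, UMDBound01 X p C) ∧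
    (IsUMD X p →
      (umdConst X p - 1) / 2 ≤ sInf {C : ℝ | 0 < C ∧ UMDBound01 X p C} ∧
      sInf {C : ℝ | 0 < C ∧ UMDBound01 X p C} ≤ umdConst X p) := by
  have hfwd : IsUMD X p → ∃ C > 0, UMDBound01 X p C := by
    rintro ⟨β, hβ, hB⟩
    exact ⟨(1 + β) / 2, by linarith, umdBound_to_01 hp hβ hB⟩
  have hbwd : (∃ C > 0, UMDBound01 X p C) → IsUMD X p := by
    rintro ⟨C, hC, h01⟩
    exact ⟨2 * C + 1, by linarith, umd01_to_bound hp hC h01⟩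
  refine ⟨⟨hfwd, hbwd⟩, fun hU => ?_⟩
  set Sβ := {β : ℝ | 0 < β ∧ UMDBound X p β} with hSβ
  set SC := {C : ℝ | 0 < C ∧ UMDBound01 X p C} with hSCs
  have hconst : umdConst X p = sInf Sβ := rfl
  obtain ⟨β0, hβ0, hB0⟩ := hU
  have hSβne : Sβ.Nonempty := ⟨β0, hβ0, hB0⟩
  have hSCne : SC.Nonempty :=
    ⟨(1 + β0) / 2, by linarith, umdBound_to_01 hp hβ0 hB0⟩
  have hbddC : BddBelow SC := ⟨0, fun C hC => hC.1.le⟩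
  have hbddβ : BddBelow Sβ := ⟨0, fun b hb => hb.1.le⟩
  constructor
  · refine le_csInf hSCne fun C hC => ?_
    have hmem : 2 * C + 1 ∈ Sβ := ⟨by linarith [hC.1], umd01_to_bound hp hC.1 hC.2⟩
    have h2 : sInf Sβ ≤ 2 * C + 1 := csInf_le hbddβ hmem
    rw [hconst]
    linarith
  · rcases subsingleton_or_nontrivial X with hs | hn
    · have hCeq : SC = Set.Ioi 0 := by
        ext C
        exact ⟨fun h => h.1, fun h => ⟨h, subsingleton_bound _ _⟩⟩
      have hβeq : Sβ = Set.Ioi 0 := by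
        ext b
        exact ⟨fun h => h.1, fun h => ⟨h, subsingleton_bound _ _⟩⟩
      rw [hconst, hCeq, hβeq]
    · rw [hconst]
      refine le_csInf hSβne fun β hβ => ?_
      have h1β : 1 ≤ β := umd_ge_one hp (by simp : (1 : ℝ) ∈ ({-1, 1} : Set ℝ)) hβ.2
      have hmem : (1 + β) / 2 ∈ SC := ⟨by linarith [hβ.1], umdBound_to_01 hp hβ.1 hβ.2⟩
      have h2 : sInf SC ≤ (1 + β) / 2 := csInf_le hbddC hmem
      linarith

end PaperMD
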